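/- For n ≥ 2, the number of admissible maximal laminar families on [n] — that is, maximal laminar families F of subsets of [n] with all members of cardinality at least 2 such that the second-smallest elements of the members of F are pairwise distinct — equals (n−1)!. (These families index a basis of the top cohomology of the complex of trees T_n, which is free of rank (n−1)!.) -/

import Mathlib

/-- A family of subsets of `[n]` is laminar if any two members are disjoint or comparable. -/
def Laminar {n : ℕ} (F : Finset (Finset (Fin n))) : Prop :=
  ∀ S ∈ F, ∀ T ∈ F, S ⊆ T ∨ T ⊆ S ∨ Disjoint S T

/-- A laminar family on `[n]` all of whose members have cardinality at least `2`. -/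
def GoodLaminar (n : ℕ) (F : Finset (Finset (Fin n))) : Prop :=
  Laminar F ∧ ∀ S ∈ F, 2 ≤ S.card

/-- A maximal laminar family of subsets of `[n]` with all members of cardinality `≥ 2`. -/
def MaxGoodLaminar (n : ℕ) (F : Finset (Finset (Fin n))) : Prop :=
  GoodLaminar n F ∧ ∀ G : Finset (Finset (Fin n)), GoodLaminar n G → F ⊆ G → G = F

/-- The second-smallest element of `S` (as an `Option`; `some` whenever `|S| ≥ 2`). -/
def secondmin? {n : ℕ} (S : Finset (Fin n)) : Option (Fin n) :=
  ((S.sort (· ≤ ·)).drop 1).head?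

/-!
An admissible maximal laminar family is a recursive tree on `[n]` in disguise: every `j ≠ 0` is
the second-smallest element of exactly one member `M j`, and `min (M j) < j` is the parent of `j`.
Laminarity forces `k > j` to lie in `M j` exactly when its parent does, because `M k` has only
one element below `k`; so `M j` is recovered from the tree as the set of points whose first
ancestor below `j` is the parent of `j`. For every tree these sets form an admissible maximal
laminar family, and there are `(n - 1)!` recursive trees.
-/

open Finset

def IsLeastTwo {α : Type*} [LinearOrder α] (S : Finset α) (a b : α) : Prop :=
  a ∈ S ∧ b ∈ S ∧ a < b ∧ ∀ x ∈ S, x ≠ a → b ≤ x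

namespace IsLeastTwo

variable {α : Type*} [LinearOrder α] {S S' : Finset α} {a a' b b' x : α}

theorem eq_of_mem_of_lt (h : IsLeastTwo S a b) (hx : x ∈ S) (hxb : x < b) : x = a := by
  by_contra hxa
  exact (h.2.2.2 x hx hxa).not_gt hxb

theorem mem_iff_eq_of_lt (h : IsLeastTwo S a b) (hxb : x < b) : x ∈ S ↔ x = a :=
  ⟨fun hx => h.eq_of_mem_of_lt hx hxb, fun hxa => hxa ▸ h.1⟩

theorem le_of_mem (h : IsLeastTwo S a b) (hx : x ∈ S) : a ≤ x := by
  by_cases hxa : x = a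
  · exact hxa.ge
  · exact h.2.2.1.le.trans (h.2.2.2 x hx hxa)

theorem two_le_card (h : IsLeastTwo S a b) : 2 ≤ S.card :=
  one_lt_card.2 ⟨a, h.1, b, h.2.1, h.2.2.1.ne⟩

theorem unique (h : IsLeastTwo S a b) (h' : IsLeastTwo S a' b') : a = a' ∧ b = b' := by
  have ha : a = a' := le_antisymm (h.le_of_mem h'.1) (h'.le_of_mem h.1)
  subst ha
  exact ⟨rfl, le_antisymm (h.2.2.2 _ h'.2.1 h'.2.2.1.ne') (h'.2.2.2 _ h.2.1 h.2.2.1.ne')⟩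

theorem mono (h : IsLeastTwo S a b) (hS'S : S' ⊆ S) (ha : a ∈ S') (hb : b ∈ S') :
    IsLeastTwo S' a b :=
  ⟨ha, hb, h.2.2.1, fun x hx => h.2.2.2 x (hS'S hx)⟩

theorem not_subset_of_lt (h : IsLeastTwo S a b) (h' : IsLeastTwo S' a' b') (hbb' : b < b') :
    ¬S ⊆ S' := fun hSS' =>
  h.2.2.1.ne ((h'.eq_of_mem_of_lt (hSS' h.1) (h.2.2.1.trans hbb')).trans
    (h'.eq_of_mem_of_lt (hSS' h.2.1) hbb').symm)

theorem left_eq_of_laminar (h : IsLeastTwo S a b) (h' : IsLeastTwo S' a' b)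
    (hSS' : S' ⊆ S ∨ S ⊆ S' ∨ Disjoint S' S) : a' = a := by
  rcases hSS' with hS'S | hSS' | hdisj
  · exact h.eq_of_mem_of_lt (hS'S h'.1) h'.2.2.1
  · exact (h'.eq_of_mem_of_lt (hSS' h.1) h.2.2.1).symm
  · exact absurd h.2.1 (disjoint_left.1 hdisj h'.2.1)

theorem mem_iff_mem_of_laminar (h : IsLeastTwo S a b) (h' : IsLeastTwo S' a' b') (hbb' : b < b')
    (hSS' : S' ⊆ S ∨ S ⊆ S' ∨ Disjoint S' S) : b' ∈ S ↔ a' ∈ S := by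
  rcases hSS' with hS'S | hSS' | hdisj
  · exact iff_of_true (hS'S h'.2.1) (hS'S h'.1)
  · exact absurd hSS' (h.not_subset_of_lt h' hbb')
  · exact iff_of_false (disjoint_left.1 hdisj h'.2.1) (disjoint_left.1 hdisj h'.1)

end IsLeastTwo

theorem exists_isLeastTwo {α : Type*} [LinearOrder α] {S : Finset α} (hS : 2 ≤ S.card) :
    ∃ a b, IsLeastTwo S a b := by
  have hS₀ : S.Nonempty := card_pos.1 (by omega)
  have hS₁ : (S.erase (S.min' hS₀)).Nonempty := by
    rw [← card_pos, card_erase_of_mem (S.min'_mem hS₀)]; omega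
  refine ⟨S.min' hS₀, (S.erase (S.min' hS₀)).min' hS₁, S.min'_mem hS₀,
    mem_of_mem_erase (min'_mem _ hS₁), S.min'_lt_of_mem_erase_min' hS₀ (min'_mem _ hS₁),
    fun x hx hxa => min'_le _ _ (mem_erase.2 ⟨hxa, hx⟩)⟩

theorem IsLeastTwo.secondmin?_eq {n : ℕ} {S : Finset (Fin n)} {a b : Fin n}
    (h : IsLeastTwo S a b) : secondmin? S = some b := by
  have hsort : S.sort (· ≤ ·) = a :: b :: ((S.erase a).erase b).sort (· ≤ ·) := by
    have hS : S = insert a (insert b ((S.erase a).erase b)) := by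
      rw [insert_erase (mem_erase.2 ⟨h.2.2.1.ne', h.2.1⟩), insert_erase h.1]
    conv_lhs => rw [hS]
    rw [sort_insert, sort_insert]
    · intro x hx
      exact h.2.2.2 x (mem_of_mem_erase (mem_of_mem_erase hx))
        (ne_of_mem_erase (mem_of_mem_erase hx))
    · simp
    · intro x hx
      rcases mem_insert.1 hx with rfl | hx
      exacts [h.2.2.1.le, h.le_of_mem (mem_of_mem_erase (mem_of_mem_erase hx))]
    · rw [mem_insert, not_or]
      exact ⟨h.2.2.1.ne, fun ha => by simp at ha⟩
  rw [secondmin?, hsort]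
  rfl

def Admissible {n : ℕ} (F : Finset (Finset (Fin n))) : Prop :=
  ∀ S ∈ F, ∀ T ∈ F, secondmin? S = secondmin? T → S = T

/-- Recursive trees on `Fin n` rooted at `0`: each `k ≠ 0` has a parent below `k`. The coordinate
at `0` is a dummy value in `Fin 1`. -/
abbrev RecursiveTree (n : ℕ) : Type := ∀ k : Fin n, Fin (max k 1)

namespace RecursiveTree

variable {n : ℕ} (t : RecursiveTree n)

def parent (k : Fin n) : Fin n :=
  Fin.castLE (by omega) (t k)

theorem parent_lt {k : Fin n} (hk : 0 < (k : ℕ)) : t.parent k < k := by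
  have := (t k).isLt
  rw [Fin.lt_def]
  simp only [parent, Fin.val_castLE]
  omega

/-- The first ancestor of `k`, counting `k` itself, below `j`; the test `k = 0` only ensures
termination, as `j ≠ 0` in all uses. -/
def descend (t : RecursiveTree n) (j k : Fin n) : Fin n :=
  if h : k < j ∨ (k : ℕ) = 0 then k
  else
    have := t.parent_lt (Nat.pos_of_ne_zero (not_or.1 h).2)
    descend t j (t.parent k)
termination_by k

variable {t} {j j' k : Fin n}

theorem descend_of_lt (hk : k < j) : t.descend j k = k := by
  rw [descend, dif_pos (Or.inl hk)]

theorem descend_of_le (hj : 0 < (j : ℕ)) (hk : j ≤ k) :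
    t.descend j k = t.descend j (t.parent k) := by
  rw [descend, dif_neg (by rw [Fin.le_def] at hk; omega)]

theorem descend_self (hj : 0 < (j : ℕ)) : t.descend j j = t.parent j := by
  rw [descend_of_le hj le_rfl, descend_of_lt (t.parent_lt hj)]

theorem descend_descend (hj : 0 < (j : ℕ)) (hjj' : j ≤ j') (k : Fin n) :
    t.descend j (t.descend j' k) = t.descend j k := by
  induction k using WellFoundedLT.induction with
  | _ k ih =>
    rcases lt_or_ge k j' with hk | hk
    · rw [descend_of_lt hk]
    · have hk₀ : 0 < (k : ℕ) := by rw [Fin.le_def] at hk hjj'; omega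
      rw [descend_of_le (hj.trans_le hjj') hk, ih _ (t.parent_lt hk₀),
        descend_of_le hj (hjj'.trans hk)]

def block (t : RecursiveTree n) (j : Fin n) : Finset (Fin n) :=
  univ.filter fun k => t.descend j k = t.parent j

theorem mem_block : k ∈ t.block j ↔ t.descend j k = t.parent j := by
  simp [block]

theorem isLeastTwo_block (hj : 0 < (j : ℕ)) : IsLeastTwo (t.block j) (t.parent j) j := by
  refine ⟨mem_block.2 (descend_of_lt (t.parent_lt hj)), mem_block.2 (descend_self hj),
    t.parent_lt hj, fun x hx hxa => ?_⟩
  by_contra! hxj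
  exact hxa ((descend_of_lt hxj).symm.trans (mem_block.1 hx))

theorem mem_block_iff_parent_mem (hj : 0 < (j : ℕ)) (hjk : j < k) :
    k ∈ t.block j ↔ t.parent k ∈ t.block j := by
  rw [mem_block, mem_block, descend_of_le hj hjk.le]

theorem block_subset_or_disjoint (hj : 0 < (j : ℕ)) (hjj' : j ≤ j') :
    t.block j' ⊆ t.block j ∨ Disjoint (t.block j) (t.block j') := by
  refine or_iff_not_imp_right.2 fun hint => ?_
  obtain ⟨x, hx, hx'⟩ := not_disjoint_iff.1 hint
  have hpar : t.descend j (t.parent j') = t.parent j := by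
    rw [← mem_block.1 hx', descend_descend hj hjj', mem_block.1 hx]
  intro y hy
  rw [mem_block, ← descend_descend hj hjj', mem_block.1 hy, hpar]

theorem eq_block (hj : 0 < (j : ℕ)) {X : Finset (Fin n)} (hX : IsLeastTwo X (t.parent j) j)
    (hrec : ∀ k, j < k → (k ∈ X ↔ t.parent k ∈ X)) : X = t.block j := by
  have hB := isLeastTwo_block (t := t) hj
  ext k
  induction k using WellFoundedLT.induction with
  | _ k ih =>
    rcases lt_trichotomy k j with hkj | rfl | hjk
    · rw [hX.mem_iff_eq_of_lt hkj, hB.mem_iff_eq_of_lt hkj]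
    · exact iff_of_true hX.2.1 hB.2.1
    · rw [hrec k hjk, mem_block_iff_parent_mem hj hjk,
        ih _ (t.parent_lt (hj.trans hjk))]

variable (t) in
def family : Finset (Finset (Fin n)) :=
  (univ.filter fun j : Fin n => 0 < (j : ℕ)).image t.block

theorem mem_family {S : Finset (Fin n)} :
    S ∈ t.family ↔ ∃ j : Fin n, 0 < (j : ℕ) ∧ t.block j = S := by
  simp [family]

theorem block_mem_family {j : Fin n} (hj : 0 < (j : ℕ)) : t.block j ∈ t.family :=
  mem_family.2 ⟨j, hj, rfl⟩

variable (t)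

theorem goodLaminar_family : GoodLaminar n t.family := by
  refine ⟨?_, ?_⟩
  · intro S hS T hT
    obtain ⟨j, hj, rfl⟩ := mem_family.1 hS
    obtain ⟨j', hj', rfl⟩ := mem_family.1 hT
    rcases le_total j j' with hjj' | hj'j
    · rcases block_subset_or_disjoint hj hjj' with h | h
      exacts [Or.inr (Or.inl h), Or.inr (Or.inr h)]
    · rcases block_subset_or_disjoint hj' hj'j with h | h
      exacts [Or.inl h, Or.inr (Or.inr h.symm)]
  · intro S hS
    obtain ⟨j, hj, rfl⟩ := mem_family.1 hS
    exact (isLeastTwo_block hj).two_le_card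

theorem admissible_family : Admissible t.family := by
  intro S hS T hT hST
  obtain ⟨j, hj, rfl⟩ := mem_family.1 hS
  obtain ⟨j', hj', rfl⟩ := mem_family.1 hT
  rw [(isLeastTwo_block hj).secondmin?_eq, (isLeastTwo_block hj').secondmin?_eq] at hST
  rw [Option.some_injective _ hST]

/-- A set of size at least two that is laminar with every block is a block: the recursion of
`eq_block` holds because the block of `k` has only one element below `k`. -/
theorem maxGoodLaminar_family : MaxGoodLaminar n t.family := by
  refine ⟨t.goodLaminar_family, fun G hG hsub => (Finset.Subset.antisymm (fun T hT => ?_) hsub)⟩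
  obtain ⟨c, b, hcb⟩ := exists_isLeastTwo (hG.2 T hT)
  have hb : 0 < (b : ℕ) := lt_of_le_of_lt (Nat.zero_le c) hcb.2.2.1
  have hlam : ∀ k : Fin n, 0 < (k : ℕ) →
      t.block k ⊆ T ∨ T ⊆ t.block k ∨ Disjoint (t.block k) T :=
    fun k hk => hG.1 _ (hsub (block_mem_family hk)) T hT
  obtain rfl : t.parent b = c := hcb.left_eq_of_laminar (isLeastTwo_block hb) (hlam b hb)
  rw [eq_block hb hcb fun k hbk =>
    hcb.mem_iff_mem_of_laminar (isLeastTwo_block (hb.trans hbk)) hbk (hlam k (hb.trans hbk))]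
  exact block_mem_family hb

theorem family_injective : Function.Injective (family (n := n)) := by
  intro t t' h
  funext j
  rcases Nat.eq_zero_or_pos j with hj | hj
  · ext; have := (t j).isLt; have := (t' j).isLt; omega
  · obtain ⟨j', hj', hjj'⟩ := mem_family.1 (h ▸ block_mem_family (t := t) hj)
    obtain ⟨hpar, rfl⟩ := (isLeastTwo_block (t := t') hj').unique (hjj' ▸ isLeastTwo_block hj)
    exact Fin.castLE_injective _ hpar.symm

end RecursiveTree

section MaximalLaminar

variable {n : ℕ} {F : Finset (Finset (Fin n))}

/-- The child of `D` through `x`: a largest member of `F` strictly inside `D` containing `x`, or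
`{x}` if there is none. -/
theorem Laminar.exists_child (hF : Laminar F) {D : Finset (Fin n)} {x : Fin n} (hx : x ∈ D) :
    ∃ C, x ∈ C ∧ C ⊆ D ∧ (C = {x} ∨ C ∈ F ∧ C ⊂ D) ∧
      ∀ Q ∈ F, Q ⊂ D → Q ⊆ C ∨ Disjoint Q C := by
  classical
  by_cases hsub : (F.filter fun Q => x ∈ Q ∧ Q ⊂ D).Nonempty
  · obtain ⟨C, hC, hCmax⟩ := exists_max_image _ card hsub
    obtain ⟨hCF, hxC, hCD⟩ := mem_filter.1 hC
    refine ⟨C, hxC, hCD.subset, Or.inr ⟨hCF, hCD⟩, fun Q hQF hQD => ?_⟩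
    rcases hF Q hQF C hCF with hQC | hCQ | hdisj
    · exact Or.inl hQC
    · exact Or.inl (eq_of_subset_of_card_le hCQ
        (hCmax Q (mem_filter.2 ⟨hQF, hCQ hxC, hQD⟩))).ge
    · exact Or.inr hdisj
  · refine ⟨{x}, mem_singleton_self x, singleton_subset_iff.2 hx, Or.inl rfl,
      fun Q hQF hQD => Or.inr (disjoint_singleton_right.2 fun hxQ => hsub ?_)⟩
    exact ⟨Q, mem_filter.2 ⟨hQF, hxQ, hQD⟩⟩

theorem MaxGoodLaminar.mem_of_compatible {T : Finset (Fin n)} (hF : MaxGoodLaminar n F)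
    (hT : 2 ≤ T.card) (hlam : ∀ S ∈ F, S ⊆ T ∨ T ⊆ S ∨ Disjoint S T) : T ∈ F := by
  classical
  have hgood : GoodLaminar n (insert T F) := by
    refine ⟨fun S hS S' hS' => ?_, fun S hS => ?_⟩
    · rcases mem_insert.1 hS with rfl | hSF <;> rcases mem_insert.1 hS' with rfl | hS'F
      · exact Or.inl subset_rfl
      · rcases hlam S' hS'F with h | h | h
        exacts [Or.inr (Or.inl h), Or.inl h, Or.inr (Or.inr h.symm)]
      · exact hlam S hSF
      · exact hF.1.1 S hSF S' hS'F
    · rcases mem_insert.1 hS with rfl | hS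
      exacts [hT, hF.1.2 S hS]
  exact hF.2 _ hgood (subset_insert T F) ▸ mem_insert_self T F

theorem MaxGoodLaminar.univ_mem (hF : MaxGoodLaminar n F) (hn : 2 ≤ n) : univ ∈ F :=
  hF.mem_of_compatible (by simpa using hn) fun S _ => Or.inl (subset_univ S)

theorem MaxGoodLaminar.union_mem (hF : MaxGoodLaminar n F) {D E V : Finset (Fin n)}
    (hDF : D ∈ F) (hED : E ⊆ D) (hVD : V ⊆ D) (hE : ∀ Q ∈ F, Q ⊂ D → Q ⊆ E ∨ Disjoint Q E)
    (hV : ∀ Q ∈ F, Q ⊂ D → Q ⊆ V ∨ Disjoint Q V) (hcard : 2 ≤ (E ∪ V).card) : E ∪ V ∈ F := by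
  refine hF.mem_of_compatible hcard fun S hS => ?_
  rcases hF.1.1 S hS D hDF with hSD | hDS | hdisj
  · rcases eq_or_ne S D with rfl | hne
    · exact Or.inr (Or.inl (union_subset hED hVD))
    · have hSD' : S ⊂ D := Finset.ssubset_iff_subset_ne.2 ⟨hSD, hne⟩
      rcases hE S hS hSD' with h | h
      · exact Or.inl (h.trans subset_union_left)
      rcases hV S hS hSD' with h' | h'
      · exact Or.inl (h'.trans subset_union_right)
      · exact Or.inr (Or.inr (disjoint_union_right.2 ⟨h, h'⟩))
  · exact Or.inr (Or.inl ((union_subset hED hVD).trans hDS))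
  · exact Or.inr (Or.inr (disjoint_of_subset_right (union_subset hED hVD) hdisj))

/-- Take a smallest member `D` containing `j` and a smaller element, with least elements
`d < b`. Maximality forces `D` to be the union of its children through `j` and through `d`.
If `b` lies in the child through `j` then `b = j`, since by minimality of `D` that child lies
above `j`; otherwise the child through `d` is a member with least elements `d < b`, like `D`,
against admissibility. -/
theorem MaxGoodLaminar.exists_mem_isLeastTwo (hF : MaxGoodLaminar n F) (hadm : Admissible F)
    {j : Fin n} (hj : 0 < (j : ℕ)) : ∃ S ∈ F, ∃ a, IsLeastTwo S a j := by
  classical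
  by_contra! hnone
  have huniv : univ ∈ F.filter fun S => j ∈ S ∧ ∃ x ∈ S, x < j :=
    mem_filter.2 ⟨hF.univ_mem (by omega), mem_univ j, ⟨0, by omega⟩, mem_univ _, hj⟩
  obtain ⟨D, hD, hDmin⟩ := exists_min_image _ card ⟨univ, huniv⟩
  obtain ⟨hDF, hjD, x, hxD, hxj⟩ := mem_filter.1 hD
  have hDmin' : ∀ Q ∈ F, j ∈ Q → ∀ y ∈ Q, y < j → Q ⊆ D → Q = D :=
    fun Q hQF hjQ y hyQ hyj hQD =>
      eq_of_subset_of_card_le hQD (hDmin Q (mem_filter.2 ⟨hQF, hjQ, y, hyQ, hyj⟩))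
  obtain ⟨d, b, hdb⟩ := exists_isLeastTwo (hF.1.2 D hDF)
  have hdj : d < j := (hdb.le_of_mem hxD).trans_lt hxj
  obtain ⟨E, hjE, hED, hE, hEsub⟩ := hF.1.1.exists_child hjD
  obtain ⟨V, hdV, hVD, hV, hVsub⟩ := hF.1.1.exists_child hdb.1
  have hEV : E ∪ V ∈ F := hF.union_mem hDF hED hVD hEsub hVsub
    (one_lt_card.2 ⟨j, mem_union_left V hjE, d, mem_union_right E hdV, hdj.ne'⟩)
  have hEVD : E ∪ V = D :=
    hDmin' _ hEV (mem_union_left V hjE) d (mem_union_right E hdV) hdj (union_subset hED hVD)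
  rcases mem_union.1 (hEVD ▸ hdb.2.1) with hbE | hbV
  · have hjb : j ≤ b := by
      by_contra! hbj
      rcases hE with rfl | ⟨hEF, hED'⟩
      · exact hbj.ne (mem_singleton.1 hbE)
      · exact hED'.ne (hDmin' E hEF hjE b hbE hbj hED)
    have hbj : b ≤ j := hdb.2.2.2 j hjD hdj.ne'
    exact hnone D hDF d (le_antisymm hbj hjb ▸ hdb)
  · rcases hV with rfl | ⟨hVF, hVD'⟩
    · exact hdb.2.2.1.ne' (mem_singleton.1 hbV)
    · refine hVD'.ne (hadm V hVF D hDF ?_)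
      rw [(hdb.mono hVD hdV hbV).secondmin?_eq, hdb.secondmin?_eq]

theorem MaxGoodLaminar.exists_family_eq (hF : MaxGoodLaminar n F) (hadm : Admissible F) :
    ∃ t : RecursiveTree n, t.family = F := by
  obtain ⟨t, ht⟩ :
      ∃ t : RecursiveTree n, ∀ j : Fin n, 0 < (j : ℕ) → ∃ S ∈ F, IsLeastTwo S (t.parent j) j := by
    have hcode : ∀ j : Fin n, ∃ c : Fin (max j 1),
        0 < (j : ℕ) → ∃ S ∈ F, IsLeastTwo S (Fin.castLE (by omega) c) j := by
      intro j
      rcases Nat.eq_zero_or_pos j with hj | hj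
      · exact ⟨⟨0, by omega⟩, fun h => absurd hj h.ne'⟩
      · obtain ⟨S, hSF, c, hS⟩ := hF.exists_mem_isLeastTwo hadm hj
        exact ⟨⟨c, by have : c < j := hS.2.2.1; omega⟩, fun _ => ⟨S, hSF, hS⟩⟩
    choose t ht using hcode
    exact ⟨t, ht⟩
  choose M hMF hM using ht
  have hblock : ∀ (j : Fin n) (hj : 0 < (j : ℕ)), M j hj = t.block j := fun j hj =>
    RecursiveTree.eq_block hj (hM j hj) fun k hjk => (hM j hj).mem_iff_mem_of_laminar
      (hM k (hj.trans hjk)) hjk (hF.1.1 _ (hMF k _) _ (hMF j hj))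
  refine ⟨t, (t.maxGoodLaminar_family.2 F hF.1 fun S hS => ?_).symm⟩
  obtain ⟨j, hj, rfl⟩ := RecursiveTree.mem_family.1 hS
  exact hblock j hj ▸ hMF j hj

end MaximalLaminar

theorem RecursiveTree.card_eq_factorial (n : ℕ) :
    Fintype.card (RecursiveTree n) = (n - 1).factorial := by
  rw [Fintype.card_pi]
  simp only [Fintype.card_fin]
  cases n with
  | zero => rfl
  | succ m =>
    rw [Fin.prod_univ_succ]
    simp [Fin.prod_univ_eq_prod_range (fun i => i + 1), prod_range_add_one_eq_factorial]

theorem card_admissible_maximal_laminar_general (n : ℕ) :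
    {F : Finset (Finset (Fin n)) | MaxGoodLaminar n F ∧
        ∀ S ∈ F, ∀ T ∈ F, secondmin? S = secondmin? T → S = T}.ncard
      = Nat.factorial (n - 1) := by
  have hrange : {F : Finset (Finset (Fin n)) | MaxGoodLaminar n F ∧ Admissible F} =
      Set.range (RecursiveTree.family (n := n)) := by
    ext F
    constructor
    · rintro ⟨hF, hadm⟩
      exact hF.exists_family_eq hadm
    · rintro ⟨t, rfl⟩
      exact ⟨t.maxGoodLaminar_family, t.admissible_family⟩
  change Set.ncard {F | MaxGoodLaminar n F ∧ Admissible F} = _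
  rw [hrange, Set.ncard_range_of_injective RecursiveTree.family_injective,
    Nat.card_eq_fintype_card, RecursiveTree.card_eq_factorial]

/-- For `n ≥ 2`, the number of admissible maximal laminar families on `[n]` — maximal laminar
families of subsets of `[n]` with all members of cardinality `≥ 2` whose members have pairwise
distinct second-smallest elements — equals `(n - 1)!`. -/
theorem card_admissible_maximal_laminar (n : ℕ) (hn : 2 ≤ n) :
    {F : Finset (Finset (Fin n)) | MaxGoodLaminar n F ∧
        ∀ S ∈ F, ∀ T ∈ F, secondmin? S = secondmin? T → S = T}.ncard
      = Nat.factorial (n - 1) :=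
  card_admissible_maximal_laminar_general n
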